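/- Fix σ > 0 and c ∈ ℝ. Then P(μ, σ, c) tends to 1 as μ tends to +∞. -/
import Mathlib


open Real MeasureTheory Filter Topology

/-- Standard normal density φ(x) = exp(-x²/2)/√(2π). -/
noncomputable def stdPdf (x : ℝ) : ℝ := Real.exp (-(x ^ 2) / 2) / Real.sqrt (2 * Real.pi)

/-- Standard normal CDF Φ(x) = ∫_{-∞}^x φ(u) du. -/
noncomputable def stdCdf (x : ℝ) : ℝ := ∫ u in Set.Iio x, stdPdf u

/-- P(μ, σ, c): probability that an agent with prior N(μ, σ²) and link cost c
is never ostracized (Proposition 1). -/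
noncomputable def Pstay (μ σ c : ℝ) : ℝ :=
  ∫ q in Set.Ioi c, (1 - Real.exp (-(2 / σ ^ 2) * (μ - c) * (q - c))) * stdPdf ((q - μ) / σ) / σ

lemma integrable_stdPdf : Integrable stdPdf := by
  have h : stdPdf = fun x => Real.exp (-(2⁻¹ : ℝ) * x ^ 2) / Real.sqrt (2 * Real.pi) := by
    funext x; unfold stdPdf; ring_nf
  rw [h]
  exact (integrable_exp_neg_mul_sq (by norm_num : (0:ℝ) < 2⁻¹)).div_const _

lemma integral_stdPdf : ∫ x, stdPdf x = 1 := by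
  have h : ∀ x : ℝ, stdPdf x = Real.exp (-(2⁻¹ : ℝ) * x ^ 2) / Real.sqrt (2 * Real.pi) := by
    intro x; unfold stdPdf; ring_nf
  simp_rw [h, integral_div, integral_gaussian]
  rw [div_eq_one_iff_eq (by positivity)]
  rw [show (2:ℝ)*Real.pi = Real.pi/2⁻¹ by ring]

/-- Shift substitution for set integrals over `Ioi`. -/
lemma setIntegral_Ioi_comp_add (f : ℝ → ℝ) (a d : ℝ) :
    ∫ x in Set.Ioi a, f (x + d) = ∫ x in Set.Ioi (a + d), f x := by
  rw [← integral_indicator measurableSet_Ioi, ← integral_indicator measurableSet_Ioi,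
    ← integral_add_right_eq_self ((Set.Ioi (a + d)).indicator f) d]
  congr 1
  funext x
  simp only [Set.indicator_apply, Set.mem_Ioi, add_lt_add_iff_right]

lemma key_integral (σ c : ℝ) (hσ : 0 < σ) (m : ℝ) :
    ∫ q in Set.Ioi c, stdPdf ((q - m) / σ) / σ = ∫ x in Set.Ioi ((c - m) / σ), stdPdf x := by
  have h1 : ∀ q : ℝ, stdPdf ((q - m) / σ) = (fun x => stdPdf (x * σ⁻¹)) (q + (-m)) := by
    intro q; simp [div_eq_mul_inv, sub_eq_add_neg]
  simp_rw [integral_div, h1]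
  rw [setIntegral_Ioi_comp_add (fun x => stdPdf (x * σ⁻¹)) c (-m),
    integral_comp_mul_right_Ioi stdPdf _ (inv_pos.mpr hσ)]
  rw [inv_inv, smul_eq_mul]
  field_simp
  ring_nf

lemma key_identity (σ c μ : ℝ) (hσ : 0 < σ) (q : ℝ) :
    (1 - Real.exp (-(2 / σ ^ 2) * (μ - c) * (q - c))) * stdPdf ((q - μ) / σ) / σ
      = stdPdf ((q - μ) / σ) / σ - stdPdf ((q - (2 * c - μ)) / σ) / σ := by
  have hrefl : Real.exp (-(2 / σ ^ 2) * (μ - c) * (q - c)) * stdPdf ((q - μ) / σ)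
      = stdPdf ((q - (2 * c - μ)) / σ) := by
    unfold stdPdf
    rw [← mul_div_assoc, ← Real.exp_add]
    congr 1
    field_simp
    ring
  rw [sub_mul, one_mul, sub_div, hrefl]

lemma integrable_comp (σ : ℝ) (hσ : 0 < σ) (m : ℝ) :
    Integrable (fun q : ℝ => stdPdf ((q - m) / σ) / σ) := by
  exact ((integrable_stdPdf.comp_div hσ.ne').comp_sub_right m).div_const σ

lemma tendsto_Ioi_integral_atBot :
    Tendsto (fun a : ℝ => ∫ x in Set.Ioi a, stdPdf x) atBot (𝓝 1) := by
  rw [← integral_stdPdf]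
  simp_rw [← integral_indicator measurableSet_Ioi]
  refine tendsto_integral_filter_of_dominated_convergence (fun x => ‖stdPdf x‖)
    (Eventually.of_forall fun a =>
      (integrable_stdPdf.aestronglyMeasurable.indicator measurableSet_Ioi)) ?_
    integrable_stdPdf.norm ?_
  · exact Eventually.of_forall fun a => Eventually.of_forall fun x =>
      (norm_indicator_le_norm_self _ _)
  · refine Eventually.of_forall fun x => ?_
    refine tendsto_const_nhds.congr' ?_
    filter_upwards [eventually_lt_atBot x] with a ha
    exact (Set.indicator_of_mem ha stdPdf).symm

lemma tendsto_Ioi_integral_atTop :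
    Tendsto (fun a : ℝ => ∫ x in Set.Ioi a, stdPdf x) atTop (𝓝 0) := by
  have h0 : (0 : ℝ) = ∫ x : ℝ, (0 : ℝ) := by simp
  rw [h0]
  simp_rw [← integral_indicator measurableSet_Ioi]
  refine tendsto_integral_filter_of_dominated_convergence (fun x => ‖stdPdf x‖)
    (Eventually.of_forall fun a =>
      (integrable_stdPdf.aestronglyMeasurable.indicator measurableSet_Ioi)) ?_
    integrable_stdPdf.norm ?_
  · exact Eventually.of_forall fun a => Eventually.of_forall fun x =>
      (norm_indicator_le_norm_self _ _)
  · refine Eventually.of_forall fun x => ?_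
    refine tendsto_const_nhds.congr' ?_
    filter_upwards [eventually_ge_atTop x] with a ha
    exact (Set.indicator_of_notMem (by simpa using ha) stdPdf).symm

/-- P(μ, σ, c) → 1 as μ → +∞. -/
theorem stmt_4 (σ c : ℝ) (hσ : 0 < σ) :
    Tendsto (fun μ : ℝ => Pstay μ σ c) atTop (𝓝 1) := by
  have key : ∀ μ : ℝ, Pstay μ σ c
      = (∫ x in Set.Ioi ((c - μ) / σ), stdPdf x)
        - ∫ x in Set.Ioi ((μ - c) / σ), stdPdf x := by
    intro μ
    unfold Pstay
    rw [setIntegral_congr_fun measurableSet_Ioi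
      (fun q _ => key_identity σ c μ hσ q)]
    rw [integral_sub ((integrable_comp σ hσ μ).restrict)
      ((integrable_comp σ hσ (2 * c - μ)).restrict)]
    rw [key_integral σ c hσ μ, key_integral σ c hσ (2 * c - μ)]
    congr 2
    ring
  simp_rw [key]
  have h1 : Tendsto (fun μ : ℝ => (c - μ) / σ) atTop atBot := by
    apply Tendsto.atBot_div_const hσ
    exact tendsto_atBot_add_const_left _ c tendsto_neg_atTop_atBot
  have h2 : Tendsto (fun μ : ℝ => (μ - c) / σ) atTop atTop := by
    apply Tendsto.atTop_div_const hσ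
    exact tendsto_atTop_add_const_right _ (-c) tendsto_id
  have := (tendsto_Ioi_integral_atBot.comp h1).sub (tendsto_Ioi_integral_atTop.comp h2)
  simpa using this
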